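/- arXiv:1907.10494 — 6 statements merged into one kernel-verified Lean document; each statement's English description precedes it below -/
import Mathlib

section
/- Let f₀, G, Q, β be real numbers with G > 0, Q > 0, β < 0 and Q + Gβ > 0, define φ : ℝ → ℝ by φ(α) = f₀ − αG/(1 − αβ) + (α²/2)·Q/(1 − αβ)², and set α^S = G/(Q + Gβ). Then α^S > 0, φ′(α) < 0 for all α ∈ [0, α^S), φ′(α) > 0 for all α > α^S, and α^S is the strict global minimizer of φ over (0, ∞): φ(α) > φ(α^S) for every α > 0 with α ≠ α^S. -/
/-!
For `α ≥ 0` the denominator `1 − αβ` is positive because `β < 0`, so the derivative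
`φ′(α) = (α(Q + Gβ) − G)/(1 − αβ)³` has the sign of the affine numerator, which vanishes only at
`αS = G/(Q + Gβ)`. Hence `φ` strictly decreases on `[0, αS]` and strictly increases on `[αS, ∞)`.
-/

open Set

noncomputable def conicModel (f₀ G Q β α : ℝ) : ℝ :=
  f₀ - α * G / (1 - α * β) + α ^ 2 / 2 * Q / (1 - α * β) ^ 2

section ConicModel

variable {f₀ G Q β α : ℝ}

theorem hasDerivAt_conicModel (h : 1 - α * β ≠ 0) :
    HasDerivAt (conicModel f₀ G Q β) ((α * (Q + G * β) - G) / (1 - α * β) ^ 3) α := by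
  have hden : HasDerivAt (fun x : ℝ => 1 - x * β) (-β) α := by
    simpa using ((hasDerivAt_id α).mul_const β).const_sub 1
  have hlin : HasDerivAt (fun x : ℝ => x * G / (1 - x * β))
      ((1 * G * (1 - α * β) - α * G * -β) / (1 - α * β) ^ 2) α :=
    ((hasDerivAt_id α).mul_const G).div hden h
  have hquad : HasDerivAt (fun x : ℝ => x ^ 2 / 2 * Q / (1 - x * β) ^ 2)
      ((α * Q * (1 - α * β) ^ 2 - α ^ 2 / 2 * Q * (2 * (1 - α * β) * -β)) / ((1 - α * β) ^ 2) ^ 2)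
      α := by
    have hnum : HasDerivAt (fun x : ℝ => x ^ 2 / 2 * Q) (α * Q) α := by
      simpa using ((hasDerivAt_pow 2 α).div_const 2).mul_const Q
    have hsq : HasDerivAt (fun x : ℝ => (1 - x * β) ^ 2) (2 * (1 - α * β) * -β) α := by
      simpa using hden.fun_pow 2
    exact hnum.div hsq (pow_ne_zero 2 h)
  refine ((hlin.const_sub f₀).add hquad).congr_deriv ?_
  field_simp
  ring

theorem deriv_conicModel (h : 1 - α * β ≠ 0) :
    deriv (conicModel f₀ G Q β) α = (α * (Q + G * β) - G) / (1 - α * β) ^ 3 :=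
  (hasDerivAt_conicModel h).deriv

theorem one_sub_mul_pos_of_nonneg_of_neg (hα : 0 ≤ α) (hβ : β < 0) : 0 < 1 - α * β := by
  nlinarith

theorem deriv_conicModel_neg (hβ : β < 0) (hQGβ : 0 < Q + G * β) (hα₀ : 0 ≤ α)
    (hα : α < G / (Q + G * β)) : deriv (conicModel f₀ G Q β) α < 0 := by
  have hden := one_sub_mul_pos_of_nonneg_of_neg hα₀ hβ
  rw [deriv_conicModel hden.ne']
  have : α * (Q + G * β) < G := (lt_div_iff₀ hQGβ).1 hα
  exact div_neg_of_neg_of_pos (by linarith) (by positivity)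

theorem deriv_conicModel_pos (hβ : β < 0) (hQGβ : 0 < Q + G * β) (hα₀ : 0 ≤ α)
    (hα : G / (Q + G * β) < α) : 0 < deriv (conicModel f₀ G Q β) α := by
  have hden := one_sub_mul_pos_of_nonneg_of_neg hα₀ hβ
  rw [deriv_conicModel hden.ne']
  have : G < α * (Q + G * β) := (div_lt_iff₀ hQGβ).1 hα
  exact div_pos (by linarith) (by positivity)

theorem continuousOn_conicModel (hβ : β < 0) : ContinuousOn (conicModel f₀ G Q β) (Ici 0) :=
  fun _ hx ↦ (hasDerivAt_conicModel
    (one_sub_mul_pos_of_nonneg_of_neg hx hβ).ne').continuousAt.continuousWithinAt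

end ConicModel

theorem lt_of_deriv_neg_of_deriv_pos {f : ℝ → ℝ} {a c x : ℝ} (hac : a ≤ c)
    (hf : ContinuousOn f (Ici a)) (hneg : ∀ y ∈ Ioo a c, deriv f y < 0)
    (hpos : ∀ y ∈ Ioi c, 0 < deriv f y) (hx : a ≤ x) (hxc : x ≠ c) : f c < f x := by
  rcases hxc.lt_or_gt with hlt | hgt
  · have hanti : StrictAntiOn f (Icc a c) :=
      strictAntiOn_of_deriv_neg (convex_Icc a c) (hf.mono Icc_subset_Ici_self)
        (by rwa [interior_Icc])
    exact hanti ⟨hx, hlt.le⟩ ⟨hac, le_rfl⟩ hlt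
  · have hmono : StrictMonoOn f (Ici c) :=
      strictMonoOn_of_deriv_pos (convex_Ici c) (hf.mono (Ici_subset_Ici.2 hac))
        (by rwa [interior_Ici])
    exact hmono (le_refl c) hgt.le hgt

theorem conic_model_min_negative_singular_point_general (f₀ G Q β : ℝ)
    (hG : G > 0) (hβ : β < 0) (hQGβ : Q + G * β > 0)
    (φ : ℝ → ℝ)
    (hφ : ∀ α : ℝ, φ α = f₀ - α * G / (1 - α * β) + α ^ 2 / 2 * Q / (1 - α * β) ^ 2)
    (αS : ℝ) (hαS : αS = G / (Q + G * β)) :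
    αS > 0 ∧
    (∀ α ∈ Set.Ico (0 : ℝ) αS, deriv φ α < 0) ∧
    (∀ α : ℝ, α > αS → deriv φ α > 0) ∧
    (∀ α : ℝ, α > 0 → α ≠ αS → φ α > φ αS) := by
  obtain rfl : φ = conicModel f₀ G Q β := funext hφ
  subst hαS
  have hαS : 0 < G / (Q + G * β) := by positivity
  have hneg : ∀ α ∈ Ico 0 (G / (Q + G * β)), deriv (conicModel f₀ G Q β) α < 0 :=
    fun α hα ↦ deriv_conicModel_neg hβ hQGβ hα.1 hα.2
  have hpos : ∀ α > G / (Q + G * β), 0 < deriv (conicModel f₀ G Q β) α :=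
    fun α hα ↦ deriv_conicModel_pos hβ hQGβ (hαS.trans hα).le hα
  refine ⟨hαS, hneg, hpos, fun α hα hne ↦ ?_⟩
  exact lt_of_deriv_neg_of_deriv_pos hαS.le (continuousOn_conicModel hβ)
    (fun y hy ↦ hneg y (Ioo_subset_Ico_self hy)) hpos hα.le hne

theorem conic_model_min_negative_singular_point (f₀ G Q β : ℝ)
    (hG : G > 0) (hQ : Q > 0) (hβ : β < 0) (hQGβ : Q + G * β > 0)
    (φ : ℝ → ℝ)
    (hφ : ∀ α : ℝ, φ α = f₀ - α * G / (1 - α * β) + α ^ 2 / 2 * Q / (1 - α * β) ^ 2)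
    (αS : ℝ) (hαS : αS = G / (Q + G * β)) :
    αS > 0 ∧
    (∀ α ∈ Set.Ico (0 : ℝ) αS, deriv φ α < 0) ∧
    (∀ α : ℝ, α > αS → deriv φ α > 0) ∧
    (∀ α : ℝ, α > 0 → α ≠ αS → φ α > φ αS) :=
  conic_model_min_negative_singular_point_general f₀ G Q β hG hβ hQGβ φ hφ αS hαS
end

section
/- Let f₀, G, Q, β be real numbers with G > 0, Q > 0, β < 0 and Q + Gβ ≤ 0, and define φ : ℝ → ℝ by φ(α) = f₀ − αG/(1 − αβ) + (α²/2)·Q/(1 − αβ)². Then φ′(α) < 0 for every α > 0, φ is strictly decreasing on (0, ∞), and there is no α* > 0 such that φ(α*) = min over α > 0 of φ(α) (i.e., no point of (0, ∞) minimizes φ over (0, ∞)). -/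
/-!
Since `β < 0`, the denominator `1 - αβ` is positive for `α > 0`, and `Q + Gβ ≤ 0` makes the
numerator `α(Q + Gβ) - G` of `φ'` negative. A strictly decreasing function on `(0, ∞)` has no
minimizer there, since every point is beaten by a larger one.
-/

open Set

theorem StrictAntiOn.not_isMinOn_Ioi {α β : Type*} [Preorder α] [NoMaxOrder α] [Preorder β]
    {f : α → β} {a x : α} (hf : StrictAntiOn f (Ioi a)) (hx : a < x) :
    ¬ IsMinOn f (Ioi a) x := by
  intro hmin
  obtain ⟨y, hxy⟩ := exists_gt x
  exact (hf hx (hx.trans hxy) hxy).not_ge (hmin (hx.trans hxy))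

noncomputable def conicModelDeriv (G Q β α : ℝ) : ℝ :=
  (α * (Q + G * β) - G) / (1 - α * β) ^ 3

theorem hasDerivAt_conicModel_s3 (f₀ G Q β : ℝ) {α : ℝ} (hα : 1 - α * β ≠ 0) :
    HasDerivAt (conicModel f₀ G Q β) (conicModelDeriv G Q β α) α := by
  have hden : HasDerivAt (fun t => 1 - t * β) (-β) α := by
    simpa using ((hasDerivAt_id α).mul_const β).const_sub 1
  have hlin := ((hasDerivAt_id α).mul_const G).fun_div hden hα
  have hquad := (((hasDerivAt_pow 2 α).div_const 2).mul_const Q).fun_div (hden.fun_pow 2)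
    (pow_ne_zero 2 hα)
  refine ((hlin.const_sub f₀).add hquad).congr_deriv ?_
  simp only [conicModelDeriv, id]
  field_simp
  ring

theorem conicModelDeriv_neg {G Q β α : ℝ} (hG : 0 < G) (hQGβ : Q + G * β ≤ 0) (hα : 0 ≤ α)
    (hden : 0 < 1 - α * β) : conicModelDeriv G Q β α < 0 :=
  div_neg_of_neg_of_pos (by linarith [mul_nonpos_of_nonneg_of_nonpos hα hQGβ]) (pow_pos hden 3)

theorem conic_model_no_minimizer_general (f₀ G Q β : ℝ)
    (hG : G > 0) (hβ : β < 0) (hQGβ : Q + G * β ≤ 0)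
    (φ : ℝ → ℝ)
    (hφ : ∀ α : ℝ, φ α = f₀ - α * G / (1 - α * β) + α ^ 2 / 2 * Q / (1 - α * β) ^ 2) :
    (∀ α : ℝ, α > 0 → deriv φ α < 0) ∧
    StrictAntiOn φ (Set.Ioi (0 : ℝ)) ∧
    ¬ ∃ αstar : ℝ, αstar > 0 ∧ ∀ α : ℝ, α > 0 → φ αstar ≤ φ α := by
  obtain rfl : φ = conicModel f₀ G Q β := funext hφ
  have hden : ∀ α > 0, 0 < 1 - α * β := fun α hα => by nlinarith
  have hφ' : ∀ α > 0, HasDerivAt (conicModel f₀ G Q β) (conicModelDeriv G Q β α) α :=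
    fun α hα => hasDerivAt_conicModel_s3 f₀ G Q β (hden α hα).ne'
  have hderiv : ∀ α > 0, deriv (conicModel f₀ G Q β) α < 0 := fun α hα => by
    rw [(hφ' α hα).deriv]
    exact conicModelDeriv_neg hG hQGβ hα.le (hden α hα)
  have hanti : StrictAntiOn (conicModel f₀ G Q β) (Ioi 0) :=
    strictAntiOn_of_deriv_neg (convex_Ioi 0)
      (fun α hα => (hφ' α hα).continuousAt.continuousWithinAt)
      (by rw [interior_Ioi]; exact hderiv)
  exact ⟨hderiv, hanti, fun ⟨αstar, hpos, hmin⟩ => hanti.not_isMinOn_Ioi hpos (isMinOn_iff.2 hmin)⟩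

theorem conic_model_no_minimizer (f₀ G Q β : ℝ)
    (hG : G > 0) (hQ : Q > 0) (hβ : β < 0) (hQGβ : Q + G * β ≤ 0)
    (φ : ℝ → ℝ)
    (hφ : ∀ α : ℝ, φ α = f₀ - α * G / (1 - α * β) + α ^ 2 / 2 * Q / (1 - α * β) ^ 2) :
    (∀ α : ℝ, α > 0 → deriv φ α < 0) ∧
    StrictAntiOn φ (Set.Ioi (0 : ℝ)) ∧
    ¬ ∃ αstar : ℝ, αstar > 0 ∧ ∀ α : ℝ, α > 0 → φ αstar ≤ φ α :=
  conic_model_no_minimizer_general f₀ G Q β hG hβ hQGβ φ hφ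
end

section
/- Let f₀, G, Q, β be real numbers with G > 0, Q > 0 and β > 0, and define φ : ℝ → ℝ by φ(α) = f₀ − αG/(1 − αβ) + (α²/2)·Q/(1 − αβ)². Then φ′(α) < 0 for every α > 1/β, and moreover φ(α) > f₀ − G²/(2Q) for every α > 1/β; in particular f₀ − G²/(2Q) < f₀ + G/β + Q/(2β²), i.e. −G²/(2Q) − G/β − Q/(2β²) < 0. -/
theorem conic_model_beyond_singular_point (f₀ G Q β : ℝ)
    (hG : G > 0) (hQ : Q > 0) (hβ : β > 0)
    (φ : ℝ → ℝ)
    (hφ : ∀ α : ℝ, φ α = f₀ - α * G / (1 - α * β) + α ^ 2 / 2 * Q / (1 - α * β) ^ 2) :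
    (∀ α : ℝ, α > 1 / β → deriv φ α < 0) ∧
    (∀ α : ℝ, α > 1 / β → φ α > f₀ - G ^ 2 / (2 * Q)) ∧
    (-(G ^ 2) / (2 * Q) - G / β - Q / (2 * β ^ 2) < 0) := by
  have hφeq : φ = fun α : ℝ => f₀ - α * G / (1 - α * β) + α ^ 2 / 2 * Q / (1 - α * β) ^ 2 :=
    funext hφ
  refine ⟨?_, ?_, ?_⟩
  · intro α hα
    have hαβ : 1 < α * β := (div_lt_iff₀ hβ).mp hα
    have hu_neg : 1 - α * β < 0 := by linarith
    have hu : (1 - α * β) ≠ 0 := ne_of_lt hu_neg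
    have hαpos : 0 < α := lt_trans (by positivity) hα
    -- derivatives
    have h1 : HasDerivAt (fun α : ℝ => 1 - α * β) (-β) α := by
      simpa using ((hasDerivAt_id α).mul_const β).const_sub 1
    have h2 : HasDerivAt (fun α : ℝ => α * G) G α := by
      simpa using (hasDerivAt_id α).mul_const G
    have hdiv1 : HasDerivAt (fun α : ℝ => α * G / (1 - α * β))
        ((G * (1 - α * β) - α * G * (-β)) / (1 - α * β) ^ 2) α := h2.div h1 hu
    have h3 : HasDerivAt (fun α : ℝ => α ^ 2 / 2 * Q) (2 * α ^ 1 / 2 * Q) α :=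
      ((hasDerivAt_pow 2 α).div_const 2).mul_const Q
    have h4 : HasDerivAt (fun α : ℝ => (1 - α * β) ^ 2)
        (2 * (1 - α * β) ^ 1 * (-β)) α := h1.pow 2
    have hdiv2 : HasDerivAt (fun α : ℝ => α ^ 2 / 2 * Q / (1 - α * β) ^ 2)
        ((2 * α ^ 1 / 2 * Q * (1 - α * β) ^ 2 - α ^ 2 / 2 * Q * (2 * (1 - α * β) ^ 1 * (-β)))
          / ((1 - α * β) ^ 2) ^ 2) α := h3.div h4 (pow_ne_zero 2 hu)
    have hder : HasDerivAt φ
        (-((G * (1 - α * β) - α * G * (-β)) / (1 - α * β) ^ 2) +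
          (2 * α ^ 1 / 2 * Q * (1 - α * β) ^ 2 - α ^ 2 / 2 * Q * (2 * (1 - α * β) ^ 1 * (-β)))
            / ((1 - α * β) ^ 2) ^ 2) α := by
      rw [hφeq]
      exact (hdiv1.const_sub f₀).add hdiv2
    rw [hder.deriv]
    have hD : -((G * (1 - α * β) - α * G * (-β)) / (1 - α * β) ^ 2) +
          (2 * α ^ 1 / 2 * Q * (1 - α * β) ^ 2 - α ^ 2 / 2 * Q * (2 * (1 - α * β) ^ 1 * (-β)))
            / ((1 - α * β) ^ 2) ^ 2
        = (α * (Q + G * β) - G) / (1 - α * β) ^ 3 := by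
      field_simp
      ring
    rw [hD]
    have hnum : 0 < α * (Q + G * β) - G := by nlinarith
    have hden : (1 - α * β) ^ 3 < 0 := Odd.pow_neg ⟨1, by norm_num⟩ hu_neg
    exact div_neg_of_pos_of_neg hnum hden
  · intro α hα
    have hαβ : 1 < α * β := (div_lt_iff₀ hβ).mp hα
    have hu_neg : 1 - α * β < 0 := by linarith
    have hu : (1 - α * β) ≠ 0 := ne_of_lt hu_neg
    have hαpos : 0 < α := lt_trans (by positivity) hα
    have key : φ α - (f₀ - G ^ 2 / (2 * Q))
        = (α * Q / (1 - α * β) - G) ^ 2 / (2 * Q) := by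
      rw [hφ α]
      field_simp
      ring
    have hne : α * Q / (1 - α * β) - G ≠ 0 := by
      have : α * Q / (1 - α * β) < 0 := div_neg_of_pos_of_neg (by positivity) hu_neg
      nlinarith
    have : 0 < (α * Q / (1 - α * β) - G) ^ 2 / (2 * Q) := by positivity
    linarith [key ▸ this]
  · have h1 : 0 < G ^ 2 / (2 * Q) := by positivity
    have h2 : 0 < G / β := by positivity
    have h3 : 0 < Q / (2 * β ^ 2) := by positivity
    have : -(G ^ 2) / (2 * Q) = -(G ^ 2 / (2 * Q)) := by ring
    rw [this]; linarith
end

section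
/- Let f₀, G, Q, β be real numbers with G > 0, Q > 0 and β > 0, define φ : ℝ → ℝ by φ(α) = f₀ − αG/(1 − αβ) + (α²/2)·Q/(1 − αβ)², and set α^S = G/(Q + Gβ). Then α^S is the strict global minimizer of φ over all positive α different from the singular point: for every α > 0 with α ≠ 1/β and α ≠ α^S, φ(α) > φ(α^S). -/
/-! Substituting `t = α / (1 - αβ)` turns the conic model into the quadratic
`f₀ - G t + (Q/2) t²`, whose strict minimum is at `t = G/Q`. The substitution is a Möbius
map, hence injective off its pole `1/β`, and it sends `α^S` to `G/Q`. -/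

section Field

variable {K : Type*} [Field K]

def conicVar (β α : K) : K := α / (1 - α * β)

lemma one_sub_mul_ne_zero_of_ne_inv {α β : K} (h : α ≠ 1 / β) : 1 - α * β ≠ 0 := by
  rintro hzero
  have hβ : β ≠ 0 := by rintro rfl; simp at hzero
  exact h (by field_simp; linear_combination -hzero)

lemma conicVar_injOn {α α' β : K} (hα : 1 - α * β ≠ 0) (hα' : 1 - α' * β ≠ 0)
    (h : conicVar β α = conicVar β α') : α = α' := by
  unfold conicVar at h
  rw [div_eq_div_iff hα hα'] at h
  linear_combination h

lemma conic_model_eq_quadratic (f₀ G Q : K) {α β : K} (hα : 1 - α * β ≠ 0) :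
    f₀ - α * G / (1 - α * β) + α ^ 2 / 2 * Q / (1 - α * β) ^ 2 =
      f₀ - G * conicVar β α + Q / 2 * conicVar β α ^ 2 := by
  unfold conicVar
  field_simp

lemma one_sub_div_mul {G Q β : K} (hQβ : Q + G * β ≠ 0) :
    1 - G / (Q + G * β) * β = Q / (Q + G * β) := by
  field_simp
  ring

lemma conicVar_div {G Q β : K} (hQ : Q ≠ 0) (hQβ : Q + G * β ≠ 0) :
    conicVar β (G / (Q + G * β)) = G / Q := by
  rw [conicVar, one_sub_div_mul hQβ]
  field_simp

end Field

lemma quadratic_lt_of_ne_vertex {K : Type*} [Field K] [LinearOrder K] [IsStrictOrderedRing K]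
    (f₀ G : K) {Q t : K} (hQ : 0 < Q) (ht : t ≠ G / Q) :
    f₀ - G * (G / Q) + Q / 2 * (G / Q) ^ 2 < f₀ - G * t + Q / 2 * t ^ 2 := by
  have hgap : f₀ - G * t + Q / 2 * t ^ 2 - (f₀ - G * (G / Q) + Q / 2 * (G / Q) ^ 2)
      = Q / 2 * (t - G / Q) ^ 2 := by
    field_simp
    ring
  have hpos : 0 < Q / 2 * (t - G / Q) ^ 2 :=
    mul_pos (half_pos hQ) (pow_two_pos_of_ne_zero (sub_ne_zero.mpr ht))
  linarith

theorem conic_model_global_min_positive_singular_point (f₀ G Q β : ℝ)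
    (hG : G > 0) (hQ : Q > 0) (hβ : β > 0)
    (φ : ℝ → ℝ)
    (hφ : ∀ α : ℝ, φ α = f₀ - α * G / (1 - α * β) + α ^ 2 / 2 * Q / (1 - α * β) ^ 2)
    (αS : ℝ) (hαS : αS = G / (Q + G * β)) :
    ∀ α : ℝ, α > 0 → α ≠ 1 / β → α ≠ αS → φ α > φ αS := by
  intro α _ hpole hαne
  have hQβ : Q + G * β ≠ 0 := by positivity
  have hαS_den : 1 - αS * β ≠ 0 := by
    rw [hαS, one_sub_div_mul hQβ]
    exact div_ne_zero hQ.ne' hQβ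
  have hα_den : 1 - α * β ≠ 0 := one_sub_mul_ne_zero_of_ne_inv hpole
  have hvertex : conicVar β αS = G / Q := hαS ▸ conicVar_div hQ.ne' hQβ
  have hα_off : conicVar β α ≠ G / Q := fun h ↦
    hαne (conicVar_injOn hα_den hαS_den (h.trans hvertex.symm))
  rw [gt_iff_lt, hφ, hφ, conic_model_eq_quadratic f₀ G Q hα_den,
    conic_model_eq_quadratic f₀ G Q hαS_den, hvertex]
  exact quadratic_lt_of_ne_vertex f₀ G hQ hα_off
end

section
/- Let f : ℝⁿ → ℝ be continuously differentiable with gradient g, bounded below on ℝⁿ, and suppose g is Lipschitz continuous on ℝⁿ with constant L > 0. Let σ ∈ (0,1), η_max ∈ [0,1], λ_min > 0, and 0 < ρ₁ ≤ ρ₂ < 1. Let (x_k), (α_k), (η_k), (Q_k), (C_k) be sequences with: Q₀ = 1, C₀ = f(x₀); for each k, η_k ∈ [0, η_max], Q_{k+1} = η_k Q_k + 1, C_{k+1} = (η_k Q_k C_k + f(x_{k+1}))/Q_{k+1}; α_k > 0 and x_{k+1} = x_k − α_k g(x_k); the nonmonotone Armijo condition f(x_k − α_k g(x_k)) ≤ C_k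 − σ α_k ‖g(x_k)‖² holds; and for each k, either α_k ≥ λ_min, or there exists α′_k > 0 with ρ₁ α′_k ≤ α_k ≤ ρ₂ α′_k and f(x_k − α′_k g(x_k)) > C_k − σ α′_k ‖g(x_k)‖² (a rejected backtracking trial). Then liminf_{k→∞} ‖g(x_k)‖ = 0; and if moreover η_max < 1, then lim_{k→∞} ‖g(x_k)‖ = 0. -/
/-!
Lipschitz continuity of the gradient gives the descent estimate
`f (x - t ∇f x) ≤ f x - t ‖∇f x‖² + L t² ‖∇f x‖²`, so a trial step rejected by the Armijo test
is longer than `(1 - σ) / L` and every accepted step is at least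
`c = min λ_min (ρ₁ (1 - σ) / L)`. Since `C (k + 1)` is the average of `C k` with weight `η k Q k`
and of `f (x (k + 1))` with weight `1`, we get `f (x k) ≤ C k` and
`C (k + 1) ≤ C k - σ c ‖g (x k)‖² / Q (k + 1)`; as `C` is bounded below by `inf f`, the series
`∑ ‖g (x k)‖² / Q (k + 1)` converges. Now `Q (k + 1) ≤ k + 2`, so the weights `1 / Q (k + 1)` are
not summable and `‖g (x k)‖` is frequently small; if `η_max < 1`, then `Q` is bounded and
`∑ ‖g (x k)‖²` itself converges.
-/

open Filter InnerProductSpace Metric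
open scoped NNReal

theorem image_sub_sub_fderiv_le_mul_sq {E : Type*} [NormedAddCommGroup E] [NormedSpace ℝ E]
    {f : E → ℝ} {K : ℝ≥0} (hf : Differentiable ℝ f) (hK : LipschitzWith K (fderiv ℝ f))
    (x y : E) : f y - f x - fderiv ℝ f x (y - x) ≤ K * ‖y - x‖ ^ 2 := by
  have hbound : ∀ z ∈ closedBall x ‖y - x‖, ‖fderiv ℝ f z - fderiv ℝ f x‖ ≤ K * ‖y - x‖ :=
    fun z hz => by
      rw [← dist_eq_norm]
      exact (hK.dist_le_mul z x).trans (mul_le_mul_of_nonneg_left hz K.coe_nonneg)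
  have h := (convex_closedBall x ‖y - x‖).norm_image_sub_le_of_norm_fderiv_le'
    (fun z _ => hf z) hbound (mem_closedBall_self (norm_nonneg _))
    (by rw [mem_closedBall, dist_eq_norm])
  rw [Real.norm_eq_abs] at h
  linarith [le_abs_self (f y - f x - fderiv ℝ f x (y - x))]

theorem image_sub_smul_gradient_le {F : Type*} [NormedAddCommGroup F] [InnerProductSpace ℝ F]
    [CompleteSpace F] {f : F → ℝ} {K : ℝ≥0} (hf : Differentiable ℝ f)
    (hK : LipschitzWith K (gradient f)) (x : F) (t : ℝ) :
    f (x - t • gradient f x) ≤ f x - t * ‖gradient f x‖ ^ 2 + K * t ^ 2 * ‖gradient f x‖ ^ 2 := by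
  have hfd : LipschitzWith K (fderiv ℝ f) := by
    simpa only [toDual_comp_gradient, one_mul] using (toDual ℝ F).lipschitz.comp hK
  have h := image_sub_sub_fderiv_le_mul_sq hf hfd x (x - t • gradient f x)
  rw [sub_sub_cancel_left, ← inner_gradient_left, inner_neg_right, inner_smul_right,
    real_inner_self_eq_norm_sq, norm_neg, norm_smul, mul_pow, Real.norm_eq_abs, sq_abs] at h
  linarith

theorem one_sub_lt_mul_of_armijo_rejected {F : Type*} [NormedAddCommGroup F]
    [InnerProductSpace ℝ F] [CompleteSpace F] {f : F → ℝ} {K : ℝ≥0} (hf : Differentiable ℝ f)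
    (hK : LipschitzWith K (gradient f)) {x : F} {c σ t : ℝ} (ht : 0 < t) (hfc : f x ≤ c)
    (hrej : c - σ * t * ‖gradient f x‖ ^ 2 < f (x - t • gradient f x)) : 1 - σ < K * t := by
  have hdesc := image_sub_smul_gradient_le hf hK x t
  have hkey : t * ((1 - σ) * ‖gradient f x‖ ^ 2) < t * (K * t * ‖gradient f x‖ ^ 2) := by
    linarith
  have hg : 0 < ‖gradient f x‖ ^ 2 := by
    refine (sq_nonneg _).lt_of_ne fun h0 => ?_
    rw [← h0] at hkey
    simp at hkey
  exact lt_of_mul_lt_mul_right (lt_of_mul_lt_mul_left hkey ht.le) hg.le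

theorem min_le_of_backtracking {F : Type*} [NormedAddCommGroup F] [InnerProductSpace ℝ F]
    [CompleteSpace F] {f : F → ℝ} {K : ℝ≥0} (hf : Differentiable ℝ f)
    (hK : LipschitzWith K (gradient f)) {x : F} {c σ α lam ρ : ℝ} (hρ : 0 ≤ ρ) (hfc : f x ≤ c)
    (hα : lam ≤ α ∨ ∃ α' > 0, ρ * α' ≤ α ∧
      c - σ * α' * ‖gradient f x‖ ^ 2 < f (x - α' • gradient f x)) :
    min lam (ρ * (1 - σ) / K) ≤ α := by
  obtain hlam | ⟨α', hα'0, hρα', hrej⟩ := hα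
  · exact (min_le_left _ _).trans hlam
  refine (min_le_right _ _).trans (le_trans ?_ hρα')
  rw [mul_div_assoc]
  refine mul_le_mul_of_nonneg_left ?_ hρ
  obtain hK0 | hK0 := K.coe_nonneg.eq_or_lt
  · rw [← hK0, div_zero]
    exact hα'0.le
  · rw [div_le_iff₀ hK0, mul_comm]
    exact (one_sub_lt_mul_of_armijo_rejected hf hK hα'0 hfc hrej).le

theorem le_mul_add_div_add_one {q c y : ℝ} (hq : 0 ≤ q) (hy : y ≤ c) :
    y ≤ (q * c + y) / (q + 1) := by
  rw [le_div_iff₀ (by linarith)]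
  nlinarith

theorem mul_add_div_add_one_le_sub {q c y d : ℝ} (hq : 0 ≤ q) (hy : y ≤ c - d) :
    (q * c + y) / (q + 1) ≤ c - d / (q + 1) := by
  rw [div_le_iff₀ (by linarith), sub_mul, div_mul_cancel₀ _ (by linarith)]
  nlinarith

theorem summable_of_le_sub_of_forall_le {a C : ℕ → ℝ} {B : ℝ} (ha : ∀ k, 0 ≤ a k)
    (hC : ∀ k, C (k + 1) ≤ C k - a k) (hB : ∀ k, B ≤ C k) : Summable a := by
  refine summable_of_sum_range_le (c := C 0 - B) ha fun N => ?_
  calc ∑ k ∈ Finset.range N, a k ≤ ∑ k ∈ Finset.range N, (C k - C (k + 1)) :=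
        Finset.sum_le_sum fun k _ => by linarith [hC k]
    _ = C 0 - C N := Finset.sum_range_sub' C N
    _ ≤ C 0 - B := by linarith [hB N]

theorem frequently_lt_of_summable_mul {w u : ℕ → ℝ} (hw : ¬Summable w) (hw0 : ∀ k, 0 ≤ w k)
    (hwu : Summable fun k => w k * u k) {ε : ℝ} (hε : 0 < ε) : ∃ᶠ k in atTop, u k < ε := by
  by_contra! hu
  refine hw ((summable_mul_right_iff hε.ne').mp (hwu.of_norm_bounded_eventually_nat ?_))
  filter_upwards [hu] with k hk
  rw [Real.norm_of_nonneg (mul_nonneg (hw0 k) hε.le)]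
  exact mul_le_mul_of_nonneg_left hk (hw0 k)

theorem liminf_eq_zero_of_frequently_lt {ι : Type*} {l : Filter ι} {u : ι → ℝ}
    (hu : ∀ i, 0 ≤ u i) (h : ∀ ε > 0, ∃ᶠ i in l, u i < ε) : liminf u l = 0 := by
  have hcobdd : IsCoboundedUnder (· ≥ ·) l u := ⟨1, fun a ha =>
    ((h 1 one_pos).and_eventually ha).exists.elim fun _ hi => (hi.2.trans hi.1.le)⟩
  refine le_antisymm (le_of_forall_pos_le_add fun ε hε => ?_) (le_liminf_of_le hcobdd
    (Eventually.of_forall hu))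
  rw [zero_add]
  exact liminf_le_of_frequently_le ((h ε hε).mono fun _ hi => hi.le)
    (isBoundedUnder_of_eventually_ge (Eventually.of_forall hu))

-- Zhang–Hager reference values: `C k` is the average of `F 0, …, F k` with weights of total `Q k`.
structure IsNonmonotoneReference (η F Q C : ℕ → ℝ) : Prop where
  Q_zero : Q 0 = 1
  C_zero : C 0 = F 0
  Q_succ : ∀ k, Q (k + 1) = η k * Q k + 1
  C_succ : ∀ k, C (k + 1) = (η k * Q k * C k + F (k + 1)) / Q (k + 1)

namespace IsNonmonotoneReference

variable {η F Q C : ℕ → ℝ}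

theorem one_le_Q (h : IsNonmonotoneReference η F Q C) (hη : ∀ k, 0 ≤ η k) (k : ℕ) :
    1 ≤ Q k := by
  induction k with
  | zero => rw [h.Q_zero]
  | succ k ih => rw [h.Q_succ]; nlinarith [hη k]

theorem Q_le_natCast_add_one (h : IsNonmonotoneReference η F Q C)
    (hη : ∀ k, η k ∈ Set.Icc (0 : ℝ) 1) (k : ℕ) : Q k ≤ k + 1 := by
  induction k with
  | zero => simp [h.Q_zero]
  | succ k ih =>
    have hQ := h.one_le_Q (fun k => (hη k).1) k
    rw [h.Q_succ]
    push_cast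
    nlinarith [(hη k).2]

theorem Q_le_inv_one_sub (h : IsNonmonotoneReference η F Q C) {ηmax : ℝ}
    (hη : ∀ k, η k ∈ Set.Icc (0 : ℝ) ηmax) (hηmax : ηmax < 1) (k : ℕ) :
    Q k ≤ (1 - ηmax)⁻¹ := by
  rw [← one_div, le_div_iff₀ (by linarith)]
  induction k with
  | zero => rw [h.Q_zero]; linarith [(hη 0).1.trans (hη 0).2]
  | succ k ih =>
    rw [h.Q_succ]
    nlinarith [(hη k).2, mul_le_mul_of_nonneg_left ih (hη k).1]

theorem le_C (h : IsNonmonotoneReference η F Q C) (hη : ∀ k, 0 ≤ η k)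
    (hF : ∀ k, F (k + 1) ≤ C k) (k : ℕ) : F k ≤ C k := by
  cases k with
  | zero => rw [h.C_zero]
  | succ k =>
    rw [h.C_succ, h.Q_succ]
    exact le_mul_add_div_add_one (mul_nonneg (hη k) (by linarith [h.one_le_Q hη k])) (hF k)

theorem summable_div_Q (h : IsNonmonotoneReference η F Q C) (hη : ∀ k, 0 ≤ η k) {d : ℕ → ℝ}
    (hd : ∀ k, 0 ≤ d k) (hF : ∀ k, F (k + 1) ≤ C k - d k) (hbdd : BddBelow (Set.range F)) :
    Summable fun k => d k / Q (k + 1) := by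
  obtain ⟨B, hB⟩ := hbdd
  have hQ k : 0 ≤ η k * Q k := mul_nonneg (hη k) (by linarith [h.one_le_Q hη k])
  refine summable_of_le_sub_of_forall_le (C := C) (B := B)
    (fun k => div_nonneg (hd k) (by linarith [h.one_le_Q hη (k + 1)])) (fun k => ?_)
    (fun k => (hB ⟨k, rfl⟩).trans (h.le_C hη (fun k => (hF k).trans (by linarith [hd k])) k))
  rw [h.C_succ, h.Q_succ]
  exact mul_add_div_add_one_le_sub (hQ k) (hF k)

theorem not_summable_inv_Q_succ (h : IsNonmonotoneReference η F Q C)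
    (hη : ∀ k, η k ∈ Set.Icc (0 : ℝ) 1) : ¬Summable fun k => (Q (k + 1))⁻¹ := by
  intro hs
  refine Real.not_summable_natCast_inv ((summable_nat_add_iff 2).mp (hs.of_nonneg_of_le
    (fun k => by positivity) fun k => ?_))
  rw [inv_le_inv₀ (by positivity) (by linarith [h.one_le_Q (fun k => (hη k).1) (k + 1)])]
  have := h.Q_le_natCast_add_one hη (k + 1)
  push_cast at this ⊢
  linarith

theorem frequently_lt_of_summable_div (h : IsNonmonotoneReference η F Q C)
    (hη : ∀ k, η k ∈ Set.Icc (0 : ℝ) 1) {u : ℕ → ℝ} (hu : Summable fun k => u k / Q (k + 1))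
    {ε : ℝ} (hε : 0 < ε) : ∃ᶠ k in atTop, u k < ε :=
  frequently_lt_of_summable_mul (h.not_summable_inv_Q_succ hη)
    (fun k => inv_nonneg.mpr (zero_le_one.trans (h.one_le_Q (fun k => (hη k).1) (k + 1))))
    (by simpa only [div_eq_inv_mul] using hu) hε

theorem summable_of_summable_div (h : IsNonmonotoneReference η F Q C) {ηmax : ℝ}
    (hη : ∀ k, η k ∈ Set.Icc (0 : ℝ) ηmax) (hηmax : ηmax < 1) {u : ℕ → ℝ} (hu0 : ∀ k, 0 ≤ u k)
    (hu : Summable fun k => u k / Q (k + 1)) : Summable u := by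
  refine (hu.mul_left (1 - ηmax)⁻¹).of_nonneg_of_le hu0 fun k => ?_
  rw [mul_div_assoc', le_div_iff₀ (by linarith [h.one_le_Q (fun k => (hη k).1) (k + 1)]),
    mul_comm]
  exact mul_le_mul_of_nonneg_right (h.Q_le_inv_one_sub hη hηmax (k + 1)) (hu0 k)

end IsNonmonotoneReference

theorem gm_aos_cone_global_convergence_general (n : ℕ)
    (f : EuclideanSpace ℝ (Fin n) → ℝ) (hf : ContDiff ℝ 1 f)
    (hbdd : BddBelow (Set.range f))
    (g : EuclideanSpace ℝ (Fin n) → EuclideanSpace ℝ (Fin n))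
    (hg : ∀ z, g z = gradient f z)
    (L : ℝ) (hL : 0 < L)
    (hLip : ∀ x y : EuclideanSpace ℝ (Fin n), ‖g x - g y‖ ≤ L * ‖x - y‖)
    (σ : ℝ) (hσ : σ ∈ Set.Ioo (0 : ℝ) 1)
    (ηmax : ℝ) (hηmax : ηmax ∈ Set.Icc (0 : ℝ) 1)
    (lamMin : ℝ) (hlamMin : 0 < lamMin)
    (ρ₁ ρ₂ : ℝ) (hρ₁ : 0 < ρ₁)
    (x : ℕ → EuclideanSpace ℝ (Fin n)) (α η Q C : ℕ → ℝ)
    (hQ0 : Q 0 = 1) (hC0 : C 0 = f (x 0))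
    (hη : ∀ k, η k ∈ Set.Icc (0 : ℝ) ηmax)
    (hQrec : ∀ k, Q (k + 1) = η k * Q k + 1)
    (hCrec : ∀ k, C (k + 1) = (η k * Q k * C k + f (x (k + 1))) / Q (k + 1))
    (hαpos : ∀ k, α k > 0)
    (hstep : ∀ k, x (k + 1) = x k - α k • g (x k))
    (harmijo : ∀ k, f (x k - α k • g (x k)) ≤ C k - σ * α k * ‖g (x k)‖ ^ 2)
    (hstepsize : ∀ k, α k ≥ lamMin ∨
      ∃ α' : ℝ, α' > 0 ∧ ρ₁ * α' ≤ α k ∧ α k ≤ ρ₂ * α' ∧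
        f (x k - α' • g (x k)) > C k - σ * α' * ‖g (x k)‖ ^ 2) :
    Filter.liminf (fun k => ‖g (x k)‖) Filter.atTop = 0 ∧
    (ηmax < 1 →
      Filter.Tendsto (fun k => ‖g (x k)‖) Filter.atTop (nhds 0)) := by
  obtain rfl : g = gradient f := funext hg
  have hLip' : LipschitzWith ⟨L, hL.le⟩ (gradient f) :=
    .of_dist_le_mul fun x y => by rw [dist_eq_norm, dist_eq_norm]; exact hLip x y
  have href : IsNonmonotoneReference η (fun k => f (x k)) Q C := ⟨hQ0, hC0, hQrec, hCrec⟩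
  have hη0 k : 0 ≤ η k := (hη k).1
  have hdesc k : f (x (k + 1)) ≤ C k - σ * α k * ‖gradient f (x k)‖ ^ 2 := hstep k ▸ harmijo k
  have hfC := href.le_C hη0 fun k =>
    (hdesc k).trans (sub_le_self _ (by have := hαpos k; have := hσ.1; positivity))
  set c := min lamMin (ρ₁ * (1 - σ) / L)
  have hc : 0 < σ * c :=
    mul_pos hσ.1 (lt_min hlamMin (div_pos (mul_pos hρ₁ (sub_pos.mpr hσ.2)) hL))
  have hdecrease k : f (x (k + 1)) ≤ C k - σ * c * ‖gradient f (x k)‖ ^ 2 := by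
    refine (hdesc k).trans (sub_le_sub_left ?_ _)
    have := hσ.1
    gcongr
    exact min_le_of_backtracking (hf.differentiable one_ne_zero) hLip' hρ₁.le (hfC k)
      ((hstepsize k).imp_right fun ⟨α', hα'0, hρα', _, hrej⟩ => ⟨α', hα'0, hρα', hrej⟩)
  have hsum : Summable fun k => ‖gradient f (x k)‖ ^ 2 / Q (k + 1) := by
    simpa only [mul_div_assoc, summable_mul_left_iff hc.ne'] using href.summable_div_Q hη0
      (fun k => by positivity) hdecrease (hbdd.mono (Set.range_comp_subset_range x f))
  refine ⟨liminf_eq_zero_of_frequently_lt (fun k => norm_nonneg _) fun ε hε => ?_, fun hη1 => ?_⟩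
  · exact (href.frequently_lt_of_summable_div (fun k => ⟨hη0 k, (hη k).2.trans hηmax.2⟩) hsum
      (pow_pos hε 2)).mono fun k hk => lt_of_pow_lt_pow_left₀ 2 hε.le hk
  · simpa [Real.sqrt_sq_eq_abs] using
      (href.summable_of_summable_div hη hη1 (fun k => sq_nonneg _) hsum).tendsto_atTop_zero.sqrt

theorem gm_aos_cone_global_convergence (n : ℕ)
    (f : EuclideanSpace ℝ (Fin n) → ℝ) (hf : ContDiff ℝ 1 f)
    (hbdd : BddBelow (Set.range f))
    (g : EuclideanSpace ℝ (Fin n) → EuclideanSpace ℝ (Fin n))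
    (hg : ∀ z, g z = gradient f z)
    (L : ℝ) (hL : 0 < L)
    (hLip : ∀ x y : EuclideanSpace ℝ (Fin n), ‖g x - g y‖ ≤ L * ‖x - y‖)
    (σ : ℝ) (hσ : σ ∈ Set.Ioo (0 : ℝ) 1)
    (ηmax : ℝ) (hηmax : ηmax ∈ Set.Icc (0 : ℝ) 1)
    (lamMin : ℝ) (hlamMin : 0 < lamMin)
    (ρ₁ ρ₂ : ℝ) (hρ₁ : 0 < ρ₁) (hρ₁₂ : ρ₁ ≤ ρ₂) (hρ₂ : ρ₂ < 1)
    (x : ℕ → EuclideanSpace ℝ (Fin n)) (α η Q C : ℕ → ℝ)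
    (hQ0 : Q 0 = 1) (hC0 : C 0 = f (x 0))
    (hη : ∀ k, η k ∈ Set.Icc (0 : ℝ) ηmax)
    (hQrec : ∀ k, Q (k + 1) = η k * Q k + 1)
    (hCrec : ∀ k, C (k + 1) = (η k * Q k * C k + f (x (k + 1))) / Q (k + 1))
    (hαpos : ∀ k, α k > 0)
    (hstep : ∀ k, x (k + 1) = x k - α k • g (x k))
    (harmijo : ∀ k, f (x k - α k • g (x k)) ≤ C k - σ * α k * ‖g (x k)‖ ^ 2)
    (hstepsize : ∀ k, α k ≥ lamMin ∨
      ∃ α' : ℝ, α' > 0 ∧ ρ₁ * α' ≤ α k ∧ α k ≤ ρ₂ * α' ∧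
        f (x k - α' • g (x k)) > C k - σ * α' * ‖g (x k)‖ ^ 2) :
    Filter.liminf (fun k => ‖g (x k)‖) Filter.atTop = 0 ∧
    (ηmax < 1 →
      Filter.Tendsto (fun k => ‖g (x k)‖) Filter.atTop (nhds 0)) :=
  gm_aos_cone_global_convergence_general n f hf hbdd g hg L hL hLip σ hσ ηmax hηmax lamMin hlamMin
    ρ₁ ρ₂ hρ₁ x α η Q C hQ0 hC0 hη hQrec hCrec hαpos hstep harmijo hstepsize
end

section
/- Let f : ℝⁿ → ℝ be continuously differentiable with gradient g that is Lipschitz continuous on ℝⁿ with constant L > 0, and suppose f is strongly convex (there exists μ > 0 with f(y) ≥ f(x) + g(x)ᵀ(y − x) + (μ/2)‖y − x‖² for all x, y ∈ ℝⁿ) with unique minimizer x*. Let σ ∈ (0,1), η_max ∈ [0,1) , λ_min > 0, and 0 < ρ₁ ≤ ρ₂ < 1. Let (x_k), (α_k), (η_k), (Q_k), (C_k) be sequences with: Q₀ = 1, C₀ = f(x₀); for each k, η_k ∈ [0, η_max], Q_{k+1} = η_k Q_k + 1, C_{k+1} = (η_k Q_k C_k + f(x_{k+1}))/Q_{k+1};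 α_k > 0 and x_{k+1} = x_k − α_k g(x_k); the nonmonotone Armijo condition f(x_k − α_k g(x_k)) ≤ C_k − σ α_k ‖g(x_k)‖² holds; and for each k, either α_k ≥ λ_min, or there exists α′_k > 0 with ρ₁ α′_k ≤ α_k ≤ ρ₂ α′_k and f(x_k − α′_k g(x_k)) > C_k − σ α′_k ‖g(x_k)‖². Then there exists ζ ∈ (0, 1) such that f(x_k) − f(x*) ≤ ζ^k (f(x₀) − f(x*)) for every k ≥ 0. -/
/-!
Write `E k = C k - f x⋆` and `e k = f (x k) - f x⋆`. By the mean value inequality a rejected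
trial step `α'` satisfies `L α' > 1 - σ`, so every accepted step with `g (x k) ≠ 0` is at least
`c = min λ_min ((1 - σ) ρ₁ / L)`. Combined with the Polyak–Łojasiewicz inequality
`2 μ e ≤ ‖g‖²` implied by strong convexity, the Armijo condition gives
`f (x (k+1)) ≤ C k - κ e k` with `κ = min (1/2) (2 σ μ c)`, and since `1 / Q (k+1) ≥ 1 - η_max` the averaging turns this into
`E (k+1) ≤ E k - γ e k` with `γ = (1 - η_max) κ`. The reference values only control `E` by
`e` one step late, but `Q (k+1) E (k+1) = (Q (k+1) - 1) E k + e (k+1)` expresses `e (k+1)`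
through `E`, whence `E (k+2) ≤ (1 - γ) E k`; so `E k ≤ √(1 - γ) ^ k E 0`, and `e k ≤ E k`.
-/

open InnerProductSpace

section Smooth

variable {H : Type*} [NormedAddCommGroup H] [InnerProductSpace ℝ H] [CompleteSpace H]
  {f : H → ℝ} {g : H → H} {L : ℝ}

theorem le_add_inner_add_mul_norm_sq_of_lipschitz_gradient
    (hfg : ∀ z, HasGradientAt f (g z) z) (hL : 0 ≤ L)
    (hLip : ∀ a b, ‖g a - g b‖ ≤ L * ‖a - b‖) (z y : H) :
    f y ≤ f z + ⟪g z, y - z⟫_ℝ + L * ‖y - z‖ ^ 2 := by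
  have hmvt := (convex_closedBall z ‖y - z‖).norm_image_sub_le_of_norm_hasFDerivWithin_le'
    (fun w _ => (hfg w).hasFDerivAt.hasFDerivWithinAt) (φ := toDual ℝ H (g z))
    (C := L * ‖y - z‖)
    (fun w hw => by
      rw [← map_sub, LinearIsometryEquiv.norm_map]
      exact (hLip w z).trans (mul_le_mul_of_nonneg_left (mem_closedBall_iff_norm.mp hw) hL))
    (Metric.mem_closedBall_self (norm_nonneg _)) (mem_closedBall_iff_norm.mpr le_rfl)
  rw [toDual_apply_apply, Real.norm_eq_abs] at hmvt
  linarith [(abs_le.mp hmvt).2]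

theorem le_sub_of_gradient_step (hfg : ∀ z, HasGradientAt f (g z) z) (hL : 0 ≤ L)
    (hLip : ∀ a b, ‖g a - g b‖ ≤ L * ‖a - b‖) (x : H) (a : ℝ) :
    f (x - a • g x) ≤ f x - a * ‖g x‖ ^ 2 + L * a ^ 2 * ‖g x‖ ^ 2 := by
  have h := le_add_inner_add_mul_norm_sq_of_lipschitz_gradient hfg hL hLip x (x - a • g x)
  rw [sub_sub_cancel_left, inner_neg_right, real_inner_smul_right, real_inner_self_eq_norm_sq,
    norm_neg, norm_smul, Real.norm_eq_abs, mul_pow, sq_abs] at h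
  linarith

theorem one_sub_lt_mul_of_armijo_fails (hfg : ∀ z, HasGradientAt f (g z) z) (hL : 0 ≤ L)
    (hLip : ∀ a b, ‖g a - g b‖ ≤ L * ‖a - b‖) {x : H} {a σ C : ℝ} (ha : 0 < a) (hgx : g x ≠ 0)
    (hxC : f x ≤ C) (hfail : C - σ * a * ‖g x‖ ^ 2 < f (x - a • g x)) :
    1 - σ < L * a := by
  have hstep := le_sub_of_gradient_step hfg hL hLip x a
  have hpos : 0 < a * ‖g x‖ ^ 2 := by positivity
  nlinarith

theorem min_le_of_backtracking_s17 (hfg : ∀ z, HasGradientAt f (g z) z) (hL : 0 < L)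
    (hLip : ∀ a b, ‖g a - g b‖ ≤ L * ‖a - b‖) {x : H} {α σ C α₀ ρ : ℝ} (hρ : 0 ≤ ρ)
    (hgx : g x ≠ 0) (hxC : f x ≤ C)
    (hα : α₀ ≤ α ∨ ∃ α' > 0, ρ * α' ≤ α ∧ C - σ * α' * ‖g x‖ ^ 2 < f (x - α' • g x)) :
    min α₀ ((1 - σ) * ρ / L) ≤ α := by
  rcases hα with hα | ⟨α', hα'0, hρα, hfail⟩
  · exact (min_le_left _ _).trans hα
  · have h := one_sub_lt_mul_of_armijo_fails hfg hL.le hLip hα'0 hgx hxC hfail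
    refine (min_le_right _ _).trans (le_trans ?_ hρα)
    rw [div_le_iff₀ hL]
    nlinarith

end Smooth

theorem two_mul_sub_le_norm_sq_of_add_inner_add_le {H : Type*} [NormedAddCommGroup H]
    [InnerProductSpace ℝ H] {a b μ : ℝ} {v d : H} (hμ : 0 < μ)
    (h : a + ⟪v, d⟫_ℝ + μ / 2 * ‖d‖ ^ 2 ≤ b) :
    2 * μ * (a - b) ≤ ‖v‖ ^ 2 := by
  have hcs := neg_le_of_abs_le (abs_real_inner_le_norm v d)
  nlinarith [sq_nonneg (‖v‖ - μ * ‖d‖)]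

theorem le_pow_mul_of_two_step_le {u : ℕ → ℝ} {ζ : ℝ} (h₁ : u 1 ≤ ζ * u 0)
    (h₂ : ∀ k, u (k + 2) ≤ ζ ^ 2 * u k) (k : ℕ) : u k ≤ ζ ^ k * u 0 := by
  induction k using Nat.twoStepInduction with
  | zero => simp
  | one => simpa using h₁
  | more k ih _ =>
    calc u (k + 2) ≤ ζ ^ 2 * u k := h₂ k
      _ ≤ ζ ^ 2 * (ζ ^ k * u 0) := mul_le_mul_of_nonneg_left ih (sq_nonneg ζ)
      _ = ζ ^ (k + 2) * u 0 := by ring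

structure IsZhangHagerReference (ηmax : ℝ) (F η Q C : ℕ → ℝ) : Prop where
  Q_zero : Q 0 = 1
  C_zero : C 0 = F 0
  η_mem : ∀ k, η k ∈ Set.Icc 0 ηmax
  Q_succ : ∀ k, Q (k + 1) = η k * Q k + 1
  C_succ : ∀ k, C (k + 1) = (η k * Q k * C k + F (k + 1)) / Q (k + 1)

namespace IsZhangHagerReference

variable {ηmax : ℝ} {F η Q C : ℕ → ℝ}

theorem one_le_Q (h : IsZhangHagerReference ηmax F η Q C) (k : ℕ) : 1 ≤ Q k := by
  induction k with
  | zero => exact h.Q_zero.ge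
  | succ k ih =>
    rw [h.Q_succ]
    have := (h.η_mem k).1
    nlinarith

theorem one_sub_mul_Q_le_one (h : IsZhangHagerReference ηmax F η Q C) (k : ℕ) :
    (1 - ηmax) * Q k ≤ 1 := by
  induction k with
  | zero => rw [h.Q_zero]; linarith [(h.η_mem 0).1.trans (h.η_mem 0).2]
  | succ k ih =>
    rw [h.Q_succ]
    nlinarith [(h.η_mem k).1, (h.η_mem k).2]

theorem Q_mul_C_succ_sub (h : IsZhangHagerReference ηmax F η Q C) (k : ℕ) :
    Q (k + 1) * (C (k + 1) - C k) = F (k + 1) - C k := by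
  have hQ : Q (k + 1) ≠ 0 := (zero_lt_one.trans_le (h.one_le_Q _)).ne'
  rw [h.C_succ, mul_sub, mul_div_cancel₀ _ hQ, h.Q_succ]
  ring

theorem le_C (h : IsZhangHagerReference ηmax F η Q C) (hF : ∀ k, F (k + 1) ≤ C k) :
    ∀ k, F k ≤ C k
  | 0 => h.C_zero.ge
  | k + 1 => by
    have := h.Q_mul_C_succ_sub k
    nlinarith [h.one_le_Q (k + 1), hF k]

theorem C_succ_le_sub (h : IsZhangHagerReference ηmax F η Q C) {k : ℕ} {β : ℝ} (hβ : 0 ≤ β)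
    (hF : F (k + 1) ≤ C k - β) : C (k + 1) ≤ C k - (1 - ηmax) * β := by
  have := h.Q_mul_C_succ_sub k
  nlinarith [h.one_le_Q (k + 1), h.one_sub_mul_Q_le_one (k + 1)]

theorem C_add_two_sub_le (h : IsZhangHagerReference ηmax F η Q C) {fstar γ : ℝ} (hγ : 0 ≤ γ)
    (hγQ : ∀ k, γ * Q (k + 1) ≤ 1) (hF : ∀ k, fstar ≤ F k)
    (hdec : ∀ k, C (k + 1) ≤ C k - γ * (F k - fstar)) (k : ℕ) :
    C (k + 2) - fstar ≤ (1 - γ) * (C k - fstar) := by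
  have hmono : C (k + 1) ≤ C k := by nlinarith [hdec k, hF k]
  have := h.Q_mul_C_succ_sub k
  nlinarith [hdec (k + 1), mul_le_mul_of_nonneg_left hmono (sub_nonneg.2 (hγQ k))]

theorem exists_rate (h : IsZhangHagerReference ηmax F η Q C) (hηmax : ηmax < 1) {fstar κ : ℝ}
    (hκ0 : 0 < κ) (hκ1 : κ < 1) (hF : ∀ k, fstar ≤ F k)
    (hdec : ∀ k, F (k + 1) ≤ C k - κ * (F k - fstar)) :
    ∃ ζ ∈ Set.Ioo (0 : ℝ) 1, ∀ k, F k - fstar ≤ ζ ^ k * (F 0 - fstar) := by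
  set γ := (1 - ηmax) * κ
  have hηmax0 : 0 ≤ ηmax := (h.η_mem 0).1.trans (h.η_mem 0).2
  have hγ0 : 0 < γ := mul_pos (sub_pos.2 hηmax) hκ0
  have hγ1 : γ < 1 := by nlinarith
  have hCdec : ∀ k, C (k + 1) ≤ C k - γ * (F k - fstar) := fun k => by
    simpa only [γ, mul_assoc] using h.C_succ_le_sub (mul_nonneg hκ0.le (sub_nonneg.2 (hF k))) (hdec k)
  have hγQ : ∀ k, γ * Q (k + 1) ≤ 1 := fun k => by
    nlinarith [h.one_sub_mul_Q_le_one (k + 1)]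
  have hFC : ∀ k, F k ≤ C k := h.le_C fun k =>
    (hdec k).trans (sub_le_self _ (mul_nonneg hκ0.le (sub_nonneg.2 (hF k))))
  have hζ0 : 0 < √(1 - γ) := Real.sqrt_pos.2 (by linarith)
  have hζ1 : √(1 - γ) < 1 := (Real.sqrt_lt' one_pos).2 (by linarith)
  have hζ : √(1 - γ) ^ 2 = 1 - γ := Real.sq_sqrt (by linarith)
  have hE1 : C 1 - fstar ≤ √(1 - γ) * (C 0 - fstar) := by
    have hC1 : C 1 ≤ C 0 - γ * (F 0 - fstar) := hCdec 0
    have hle : 1 - γ ≤ √(1 - γ) := by nlinarith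
    rw [h.C_zero] at hC1 ⊢
    nlinarith [mul_le_mul_of_nonneg_right hle (sub_nonneg.2 (hF 0))]
  refine ⟨√(1 - γ), ⟨hζ0, hζ1⟩, fun k => ?_⟩
  calc F k - fstar ≤ C k - fstar := by linarith [hFC k]
    _ ≤ √(1 - γ) ^ k * (C 0 - fstar) :=
      le_pow_mul_of_two_step_le (u := (C · - fstar)) hE1 (by rw [hζ]; exact h.C_add_two_sub_le hγ0.le hγQ hF hCdec) k
    _ = √(1 - γ) ^ k * (F 0 - fstar) := by rw [h.C_zero]

end IsZhangHagerReference

theorem gm_aos_cone_rlinear_convergence_general (n : ℕ)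
    (f : EuclideanSpace ℝ (Fin n) → ℝ) (hf : ContDiff ℝ 1 f)
    (g : EuclideanSpace ℝ (Fin n) → EuclideanSpace ℝ (Fin n))
    (hg : ∀ z, g z = gradient f z)
    (L : ℝ) (hL : 0 < L)
    (hLip : ∀ x y : EuclideanSpace ℝ (Fin n), ‖g x - g y‖ ≤ L * ‖x - y‖)
    (μ : ℝ) (hμ : 0 < μ)
    (hsc : ∀ x y : EuclideanSpace ℝ (Fin n),
      f y ≥ f x + (inner ℝ (g x) (y - x) : ℝ) + μ / 2 * ‖y - x‖ ^ 2)
    (xstar : EuclideanSpace ℝ (Fin n))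
    (hmin : ∀ y, f xstar ≤ f y)
    (σ : ℝ) (hσ : σ ∈ Set.Ioo (0 : ℝ) 1)
    (ηmax : ℝ) (hηmax : ηmax ∈ Set.Ico (0 : ℝ) 1)
    (lamMin : ℝ) (hlamMin : 0 < lamMin)
    (ρ₁ ρ₂ : ℝ) (hρ₁ : 0 < ρ₁)
    (x : ℕ → EuclideanSpace ℝ (Fin n)) (α η Q C : ℕ → ℝ)
    (hQ0 : Q 0 = 1) (hC0 : C 0 = f (x 0))
    (hη : ∀ k, η k ∈ Set.Icc (0 : ℝ) ηmax)
    (hQrec : ∀ k, Q (k + 1) = η k * Q k + 1)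
    (hCrec : ∀ k, C (k + 1) = (η k * Q k * C k + f (x (k + 1))) / Q (k + 1))
    (hαpos : ∀ k, α k > 0)
    (hstep : ∀ k, x (k + 1) = x k - α k • g (x k))
    (harmijo : ∀ k, f (x k - α k • g (x k)) ≤ C k - σ * α k * ‖g (x k)‖ ^ 2)
    (hstepsize : ∀ k, α k ≥ lamMin ∨
      ∃ α' : ℝ, α' > 0 ∧ ρ₁ * α' ≤ α k ∧ α k ≤ ρ₂ * α' ∧
        f (x k - α' • g (x k)) > C k - σ * α' * ‖g (x k)‖ ^ 2) :
    ∃ ζ ∈ Set.Ioo (0 : ℝ) 1,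
      ∀ k : ℕ, f (x k) - f xstar ≤ ζ ^ k * (f (x 0) - f xstar) := by
  obtain ⟨hσ0, hσ1⟩ := hσ
  have hfg : ∀ z, HasGradientAt f (g z) z := fun z =>
    hg z ▸ ((hf.differentiable one_ne_zero) z).hasGradientAt
  have href : IsZhangHagerReference ηmax (f ∘ x) η Q C := ⟨hQ0, hC0, hη, hQrec, hCrec⟩
  have harm : ∀ k, f (x (k + 1)) ≤ C k - σ * α k * ‖g (x k)‖ ^ 2 := fun k =>
    hstep k ▸ harmijo k
  have hFC : ∀ k, f (x k) ≤ C k := href.le_C fun k =>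
    (harm k).trans (sub_le_self _ (by have := hαpos k; positivity))
  set c := min lamMin ((1 - σ) * ρ₁ / L)
  have hc : 0 < c := lt_min hlamMin (by have := sub_pos.2 hσ1; positivity)
  have hdec : ∀ k, f (x (k + 1)) ≤ C k - min (1 / 2) (σ * c * (2 * μ)) * (f (x k) - f xstar) := by
    refine fun k => (harm k).trans (sub_le_sub_left ?_ _)
    calc min (1 / 2) (σ * c * (2 * μ)) * (f (x k) - f xstar)
        ≤ σ * c * (2 * μ) * (f (x k) - f xstar) :=
          mul_le_mul_of_nonneg_right (min_le_right _ _) (sub_nonneg.2 (hmin _))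
      _ ≤ σ * c * ‖g (x k)‖ ^ 2 := by
          rw [mul_assoc]
          gcongr
          exact two_mul_sub_le_norm_sq_of_add_inner_add_le hμ (hsc _ _)
      _ ≤ σ * α k * ‖g (x k)‖ ^ 2 := by
          rcases eq_or_ne (g (x k)) 0 with h0 | hne
          · simp [h0]
          · gcongr
            refine min_le_of_backtracking_s17 hfg hL hLip hρ₁.le hne (hFC k) ?_
            exact (hstepsize k).imp id fun ⟨α', h0, hρ, _, hfail⟩ => ⟨α', h0, hρ, hfail⟩
  exact href.exists_rate hηmax.2 (by positivity) (min_lt_of_left_lt one_half_lt_one)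
    (fun k => hmin _) hdec

theorem gm_aos_cone_rlinear_convergence (n : ℕ)
    (f : EuclideanSpace ℝ (Fin n) → ℝ) (hf : ContDiff ℝ 1 f)
    (g : EuclideanSpace ℝ (Fin n) → EuclideanSpace ℝ (Fin n))
    (hg : ∀ z, g z = gradient f z)
    (L : ℝ) (hL : 0 < L)
    (hLip : ∀ x y : EuclideanSpace ℝ (Fin n), ‖g x - g y‖ ≤ L * ‖x - y‖)
    (μ : ℝ) (hμ : 0 < μ)
    (hsc : ∀ x y : EuclideanSpace ℝ (Fin n),
      f y ≥ f x + (inner ℝ (g x) (y - x) : ℝ) + μ / 2 * ‖y - x‖ ^ 2)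
    (xstar : EuclideanSpace ℝ (Fin n))
    (hmin : ∀ y, f xstar ≤ f y)
    (huniq : ∀ y, (∀ z, f y ≤ f z) → y = xstar)
    (σ : ℝ) (hσ : σ ∈ Set.Ioo (0 : ℝ) 1)
    (ηmax : ℝ) (hηmax : ηmax ∈ Set.Ico (0 : ℝ) 1)
    (lamMin : ℝ) (hlamMin : 0 < lamMin)
    (ρ₁ ρ₂ : ℝ) (hρ₁ : 0 < ρ₁) (hρ₁₂ : ρ₁ ≤ ρ₂) (hρ₂ : ρ₂ < 1)
    (x : ℕ → EuclideanSpace ℝ (Fin n)) (α η Q C : ℕ → ℝ)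
    (hQ0 : Q 0 = 1) (hC0 : C 0 = f (x 0))
    (hη : ∀ k, η k ∈ Set.Icc (0 : ℝ) ηmax)
    (hQrec : ∀ k, Q (k + 1) = η k * Q k + 1)
    (hCrec : ∀ k, C (k + 1) = (η k * Q k * C k + f (x (k + 1))) / Q (k + 1))
    (hαpos : ∀ k, α k > 0)
    (hstep : ∀ k, x (k + 1) = x k - α k • g (x k))
    (harmijo : ∀ k, f (x k - α k • g (x k)) ≤ C k - σ * α k * ‖g (x k)‖ ^ 2)
    (hstepsize : ∀ k, α k ≥ lamMin ∨
      ∃ α' : ℝ, α' > 0 ∧ ρ₁ * α' ≤ α k ∧ α k ≤ ρ₂ * α' ∧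
        f (x k - α' • g (x k)) > C k - σ * α' * ‖g (x k)‖ ^ 2) :
    ∃ ζ ∈ Set.Ioo (0 : ℝ) 1,
      ∀ k : ℕ, f (x k) - f xstar ≤ ζ ^ k * (f (x 0) - f xstar) :=
  gm_aos_cone_rlinear_convergence_general n f hf g hg L hL hLip μ hμ hsc xstar hmin σ hσ ηmax hηmax
    lamMin hlamMin ρ₁ ρ₂ hρ₁ x α η Q C hQ0 hC0 hη hQrec hCrec hαpos hstep harmijo hstepsize
end
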